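/- For every natural number N ≥ 1, modulo the ideal of A generated by z + z⁻¹ + xy one has the congruence e_N(y) ≡ −(N+1)·x·y·(z + z⁻¹)^(N−1)·(z − z⁻¹), i.e. e_N(y) + (N+1)·x·y·(z + z⁻¹)^(N−1)·(z − z⁻¹) lies in the ideal generated by z + z⁻¹ + xy. -/

import Mathlib

open LaurentPolynomial

noncomputable section

/-- The ring `A = ℂ[x, y, z, z⁻¹]`: Laurent polynomials in `z` over `ℂ[x, y]`. -/
abbrev A : Type := LaurentPolynomial (MvPolynomial (Fin 2) ℂ)

/-- The variable `x`. -/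
def Xv : A := C (MvPolynomial.X 0)

/-- The variable `y`. -/
def Yv : A := C (MvPolynomial.X 1)

/-- The variable `z`. -/
def Zv : A := T 1

/-- The variable `z⁻¹`. -/
def Zi : A := T (-1)

/-! With `u = z + z⁻¹` and `v = z - z⁻¹`, the derivation `L = k̲ + k̲⁻¹` kills `z`, `z⁻¹`, hence `u`,
`v` and `xy`, while `L x = x u` and `L y = -y u`. Since `e u = -x v`, induction gives
`e_n u = -x uⁿ v`, and then `e_{m+1} y = u^{m+1} v - (m+1) x y u^m v`. Adding
`(m+2) x y u^m v` yields `u^m v (u + x y)`, a multiple of `z + z⁻¹ + xy`. -/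

section IteratedCommutator

variable {R B : Type*} [CommRing R] [CommRing B] [Algebra R B]
  (L : Derivation R B B) (E : ℕ → Derivation R B B)

theorem iterCommutator_apply_eq_neg_mul_pow_mul
    (hE : ∀ (n : ℕ) (a : B), E (n + 1) a = L (E n a) - E n (L a))
    {x u v : B} (hLu : L u = 0) (hLv : L v = 0) (hLx : L x = x * u)
    (hE0u : E 0 u = -(x * v)) (n : ℕ) :
    E n u = -(x * u ^ n * v) := by
  induction n with
  | zero => simpa using hE0u
  | succ n ih =>
    rw [hE, ih, hLu, map_zero, sub_zero]
    simp only [map_neg, Derivation.leibniz, Derivation.leibniz_pow, hLu, hLv, hLx, smul_eq_mul,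
      mul_zero, nsmul_zero, zero_add, neg_inj]
    ring

theorem iterCommutator_succ_apply
    (hE : ∀ (n : ℕ) (a : B), E (n + 1) a = L (E n a) - E n (L a))
    {x y u v : B} (hLu : L u = 0) (hLv : L v = 0) (hLx : L x = x * u) (hLy : L y = -(y * u))
    (hE0u : E 0 u = -(x * v)) (hE0y : E 0 y = v) (m : ℕ) :
    E (m + 1) y = u ^ (m + 1) * v - (m + 1) * (x * y) * u ^ m * v := by
  have hEu := iterCommutator_apply_eq_neg_mul_pow_mul L E hE hLu hLv hLx hE0u
  induction m with
  | zero =>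
    rw [hE, hE0y, hLv, hLy, map_neg, Derivation.leibniz, hE0u, hE0y]
    simp only [smul_eq_mul]
    ring
  | succ m ih =>
    have hL_ih : L (E (m + 1) y) = 0 := by
      rw [ih]
      simp only [map_sub, map_add, Derivation.leibniz, Derivation.leibniz_pow, Derivation.map_natCast,
        Derivation.map_one_eq_zero, hLu, hLv, hLx, hLy, smul_eq_mul, nsmul_zero, add_tsub_cancel_right,
        mul_zero, mul_neg, add_zero, zero_add, zero_sub, neg_eq_zero]
      ring
    rw [hE, hL_ih, hLy, map_neg, Derivation.leibniz, hEu, ih]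
    simp only [smul_eq_mul]
    push_cast
    ring

end IteratedCommutator

lemma Zi_mul_Zv : Zi * Zv = 1 := by
  rw [Zv, Zi, ← T_add]; norm_num

lemma Derivation.apply_Zi (D : Derivation ℂ A A) : D Zi = -(Zi ^ 2 * D Zv) := by
  rw [D.leibniz_of_mul_eq_one Zi_mul_Zv, neg_smul, smul_eq_mul]

theorem stmt8_general
    (e kk kk' : Derivation ℂ A A)
    (hey : e Yv = Zv - Zi) (hez : e Zv = -(Xv * Zv))
    (hkx : kk Xv = Xv * Zv) (hky : kk Yv = -(Yv * Zv)) (hkz : kk Zv = 0)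
    (hk'x : kk' Xv = Xv * Zi) (hk'y : kk' Yv = -(Yv * Zi)) (hk'z : kk' Zv = 0)
    (E : ℕ → Derivation ℂ A A) (hE0 : E 0 = e)
    (hEs : ∀ (n : ℕ) (a : A), E (n + 1) a = (kk + kk') (E n a) - E n ((kk + kk') a))
    (N : ℕ) (hN : 1 ≤ N) :
    E N Yv + ((N : A) + 1) * Xv * Yv * (Zv + Zi) ^ (N - 1) * (Zv - Zi)
      ∈ Ideal.span {Zv + Zi + Xv * Yv} := by
  set L := kk + kk'
  have hLz : L Zv = 0 := by simp [L, hkz, hk'z]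
  have hLzi : L Zi = 0 := by rw [L.apply_Zi, hLz, mul_zero, neg_zero]
  have hLu : L (Zv + Zi) = 0 := by rw [map_add, hLz, hLzi, add_zero]
  have hLv : L (Zv - Zi) = 0 := by rw [map_sub, hLz, hLzi, sub_zero]
  have hLx : L Xv = Xv * (Zv + Zi) := by simp only [L, Derivation.add_apply, hkx, hk'x]; ring
  have hLy : L Yv = -(Yv * (Zv + Zi)) := by
    simp only [L, Derivation.add_apply, hky, hk'y]; ring
  have hE0u : E 0 (Zv + Zi) = -(Xv * (Zv - Zi)) := by
    rw [hE0, map_add, e.apply_Zi, hez]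
    linear_combination Xv * Zi * Zi_mul_Zv
  have hE0y : E 0 Yv = Zv - Zi := by rw [hE0, hey]
  obtain ⟨M, rfl⟩ : ∃ M, N = M + 1 := ⟨N - 1, by omega⟩
  rw [iterCommutator_succ_apply L E hEs hLu hLv hLx hLy hE0u hE0y M,
    Ideal.mem_span_singleton']
  exact ⟨(Zv + Zi) ^ M * (Zv - Zi), by push_cast; ring_nf⟩

/-- Modulo the ideal generated by `z + z⁻¹ + xy`, one has
`e_N(y) ≡ −(N+1) x y (z + z⁻¹)^(N−1) (z − z⁻¹)` for `N ≥ 1`. -/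
theorem stmt8
    (e f kk kk' : Derivation ℂ A A)
    (hex : e Xv = 0) (hey : e Yv = Zv - Zi) (hez : e Zv = -(Xv * Zv))
    (hfx : f Xv = -(Zv - Zi)) (hfy : f Yv = 0) (hfz : f Zv = Yv * Zv)
    (hkx : kk Xv = Xv * Zv) (hky : kk Yv = -(Yv * Zv)) (hkz : kk Zv = 0)
    (hk'x : kk' Xv = Xv * Zi) (hk'y : kk' Yv = -(Yv * Zi)) (hk'z : kk' Zv = 0)
    (E F : ℕ → Derivation ℂ A A) (hE0 : E 0 = e) (hF0 : F 0 = f)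
    (hEs : ∀ (n : ℕ) (a : A), E (n + 1) a = (kk + kk') (E n a) - E n ((kk + kk') a))
    (hFs : ∀ (n : ℕ) (a : A), F (n + 1) a = (kk + kk') (F n a) - F n ((kk + kk') a))
    (N : ℕ) (hN : 1 ≤ N) :
    E N Yv + ((N : A) + 1) * Xv * Yv * (Zv + Zi) ^ (N - 1) * (Zv - Zi)
      ∈ Ideal.span {Zv + Zi + Xv * Yv} :=
  stmt8_general e kk kk' hey hez hkx hky hkz hk'x hk'y hk'z E hE0 hEs N hN
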